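/- Let n be a composite positive integer with canonical prime factorization n = p_1^{k_1} ⋯ p_t^{k_t}. Then the independence number of the prime-coprime graph of Z_n satisfies α(Θ(Z_n)) ≥ max{ (p_i^{k_i} − p_i) · Π_{r ≠ i} p_r^{k_r} (over all i with k_i ≥ 2), (p_i^{k_i} − 1)(p_j^{k_j} − 1) · Π_{r ≠ i, j} p_r^{k_r} (over all pairs i ≠ j) }. -/

import Mathlib

/-- The prime-coprime graph: distinct vertices `g, h` are adjacent iff
`gcd (orderOf g) (orderOf h)` is `1` or a prime. -/
def primeCoprimeGraph (G : Type*) [Monoid G] : SimpleGraph G where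
  Adj g h := g ≠ h ∧
    (Nat.gcd (orderOf g) (orderOf h) = 1 ∨ (Nat.gcd (orderOf g) (orderOf h)).Prime)
  symm := by
    refine ⟨?_⟩
    rintro g h ⟨hne, hd⟩
    exact ⟨hne.symm, by rwa [Nat.gcd_comm]⟩
  loopless := ⟨by rintro g ⟨hne, -⟩; exact hne rfl⟩

/-- A set of vertices is independent if no two of its elements are adjacent. -/
def IsIndepSet {V : Type*} (Γ : SimpleGraph V) (s : Set V) : Prop :=
  s.Pairwise fun a b => ¬ Γ.Adj a b

open scoped Classical in
/-- The independence number of a graph on a finite vertex set. -/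
noncomputable def indepNum {V : Type*} [Fintype V] (Γ : SimpleGraph V) : ℕ :=
  Finset.univ.sup fun s : Finset V => if IsIndepSet Γ (s : Set V) then s.card else 0

/-- A graph is split if its vertex set can be partitioned into two disjoint nonempty
subsets, one a clique and the other an independent set. -/
def IsSplit {V : Type*} (Γ : SimpleGraph V) : Prop :=
  ∃ K I : Set V, K.Nonempty ∧ I.Nonempty ∧ Disjoint K I ∧ K ∪ I = Set.univ ∧
    Γ.IsClique K ∧ IsIndepSet Γ I

section Aux

open scoped Classical

lemma le_indepNum {V : Type*} [Fintype V] (Γ : SimpleGraph V) (s : Finset V)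
    (h : IsIndepSet Γ (s : Set V)) : s.card ≤ indepNum Γ := by
  have := Finset.le_sup (f := fun s : Finset V =>
    if IsIndepSet Γ (s : Set V) then s.card else 0) (Finset.mem_univ s)
  simpa only [if_pos h, indepNum] using this

lemma card_filter_val_dvd (n d : ℕ) [NeZero n] (hd : d ∣ n) :
    (Finset.univ.filter fun g : Multiplicative (ZMod n) =>
      d ∣ (Multiplicative.toAdd g).val).card = n / d := by
  have hn0 : n ≠ 0 := NeZero.ne n
  have hd0 : d ≠ 0 := by rintro rfl; exact hn0 (Nat.zero_dvd.mp hd)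
  rw [← Finset.card_range (n / d)]
  apply Finset.card_bij (fun g _ => (Multiplicative.toAdd g).val / d)
  · intro g hg
    rw [Finset.mem_filter] at hg
    rw [Finset.mem_range]
    exact Nat.div_lt_div_of_lt_of_dvd hd ((Multiplicative.toAdd g).val_lt)
  · intro g hg h hh hgh
    rw [Finset.mem_filter] at hg hh
    have : (Multiplicative.toAdd g).val = (Multiplicative.toAdd h).val := by
      rw [← Nat.div_mul_cancel hg.2, ← Nat.div_mul_cancel hh.2, hgh]
    exact Multiplicative.toAdd.injective (ZMod.val_injective n this)
  · intro j hj
    rw [Finset.mem_range] at hj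
    have hlt : d * j < n := by
      have hdn := Nat.mul_div_cancel' hd
      nlinarith [Nat.pos_of_ne_zero hd0]
    refine ⟨Multiplicative.ofAdd (((d * j : ℕ) : ZMod n)), ?_, ?_⟩
    · rw [Finset.mem_filter]
      refine ⟨Finset.mem_univ _, ?_⟩
      simp only [toAdd_ofAdd, ZMod.val_cast_of_lt hlt]
      exact Dvd.intro j rfl
    · simp only [toAdd_ofAdd, ZMod.val_cast_of_lt hlt]
      exact Nat.mul_div_cancel_left j (Nat.pos_of_ne_zero hd0)

lemma card_filter_orderOf_dvd (n m : ℕ) [NeZero n] (hm : m ∣ n) :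
    (Finset.univ.filter fun g : Multiplicative (ZMod n) => orderOf g ∣ m).card = m := by
  have hn0 : n ≠ 0 := NeZero.ne n
  have hm0 : m ≠ 0 := by rintro rfl; exact hn0 (Nat.zero_dvd.mp hm)
  have key : ∀ g : Multiplicative (ZMod n),
      (orderOf g ∣ m ↔ (n / m) ∣ (Multiplicative.toAdd g).val) := by
    intro g
    set x := Multiplicative.toAdd g with hx
    have hord : orderOf g = addOrderOf x := by
      rw [hx, ← orderOf_ofAdd_eq_addOrderOf]
      rfl
    rw [hord, addOrderOf_dvd_iff_nsmul_eq_zero]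
    have : m • x = ((m * x.val : ℕ) : ZMod n) := by
      push_cast
      rw [ZMod.natCast_zmod_val, nsmul_eq_mul]
    rw [this, ZMod.natCast_eq_zero_iff]
    have hm' : 0 < m := Nat.pos_of_ne_zero hm0
    constructor
    · intro h
      have h2 : m * (n / m) ∣ m * x.val := by rwa [Nat.mul_div_cancel' hm]
      exact (Nat.mul_dvd_mul_iff_left hm').mp h2
    · intro h
      have h2 : m * (n / m) ∣ m * x.val := (Nat.mul_dvd_mul_iff_left hm').mpr h
      rwa [Nat.mul_div_cancel' hm] at h2
  rw [Finset.filter_congr (fun g _ => key g)]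
  rw [card_filter_val_dvd n (n / m) (Nat.div_dvd_of_dvd hm)]
  exact Nat.div_div_self hm hn0

lemma dvd_char {p e k m d : ℕ} (hp : p.Prime) (he : 1 ≤ e) (_hek : e ≤ k)
    (hpm : ¬ p ∣ m) (hm0 : m ≠ 0) (hd : d ∣ p ^ k * m) :
    p ^ e ∣ d ↔ ¬ d ∣ p ^ (e - 1) * m := by
  have hd0 : d ≠ 0 := by
    rintro rfl
    exact absurd (Nat.zero_dvd.mp hd) (Nat.mul_ne_zero (pow_ne_zero _ hp.pos.ne') hm0)
  constructor
  · intro hpe hcon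
    have : p ^ e ∣ p ^ (e - 1) * m := hpe.trans hcon
    have he' : p ^ (e - 1) * p ∣ p ^ (e - 1) * m := by
      rwa [← pow_succ, Nat.sub_add_cancel he]
    exact hpm ((Nat.mul_dvd_mul_iff_left (Nat.pos_of_ne_zero (pow_ne_zero _ hp.pos.ne'))).mp he')
  · intro hcon
    by_contra hpe
    apply hcon
    have ha : d.factorization p ≤ e - 1 := by
      by_contra hlt
      exact hpe ((Nat.Prime.pow_dvd_iff_le_factorization hp hd0).mpr (by omega))
    have hoc : (d / p ^ d.factorization p) ∣ m := by
      have h1 : (d / p ^ d.factorization p) ∣ m * p ^ k :=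
        (Nat.ordCompl_dvd d p).trans (by rwa [mul_comm] at hd)
      have h2 : Nat.Coprime (d / p ^ d.factorization p) (p ^ k) :=
        Nat.Coprime.pow_right _ (Nat.coprime_comm.mp
          ((Nat.Prime.coprime_iff_not_dvd hp).mpr (Nat.not_dvd_ordCompl hp hd0)))
      exact h2.dvd_of_dvd_mul_right h1
    calc d = p ^ d.factorization p * (d / p ^ d.factorization p) :=
            (Nat.ordProj_mul_ordCompl_eq_self d p).symm
    _ ∣ p ^ (e - 1) * m := mul_dvd_mul (pow_dvd_pow p ha) hoc

lemma alg_aux (P Q m : ℕ) (hP : 1 ≤ P) (hQ : 1 ≤ Q) :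
    (P - 1) * (Q - 1) * m + (Q * m + P * m) = P * (Q * m) + m := by
  obtain ⟨a, rfl⟩ := Nat.exists_eq_add_of_le hP
  obtain ⟨b, rfl⟩ := Nat.exists_eq_add_of_le hQ
  simp only [Nat.add_sub_cancel_left]
  ring

end Aux

theorem indepNum_cyclic_lower_bound (n t : ℕ) [NeZero n] (p k : Fin t → ℕ)
    (hp : ∀ r, (p r).Prime) (hmono : StrictMono p) (hk : ∀ r, 1 ≤ k r)
    (hn : n = ∏ r, p r ^ k r) (hn1 : 1 < n) (hnp : ¬ n.Prime) :
    (∀ i : Fin t, 2 ≤ k i →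
      (p i ^ k i - p i) * ∏ r ∈ Finset.univ.erase i, p r ^ k r ≤
        indepNum (primeCoprimeGraph (Multiplicative (ZMod n)))) ∧
    (∀ i j : Fin t, i ≠ j →
      (p i ^ k i - 1) * (p j ^ k j - 1) *
          ∏ r ∈ (Finset.univ.erase i).erase j, p r ^ k r ≤
        indepNum (primeCoprimeGraph (Multiplicative (ZMod n)))) := by
  classical
  have hn0 : n ≠ 0 := NeZero.ne n
  have hcard : Fintype.card (Multiplicative (ZMod n)) = n := by
    rw [Fintype.card_multiplicative, ZMod.card]
  have hndvd : ∀ i : Fin t, ¬ p i ∣ ∏ r ∈ Finset.univ.erase i, p r ^ k r := by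
    intro i hdvd
    obtain ⟨r, hr, hdr⟩ := ((hp i).prime.dvd_finset_prod_iff _).mp hdvd
    have heq : p i = p r :=
      (Nat.prime_dvd_prime_iff_eq (hp i) (hp r)).mp ((hp i).dvd_of_dvd_pow hdr)
    exact (Finset.ne_of_mem_erase hr) (hmono.injective heq).symm
  have hordn : ∀ g : Multiplicative (ZMod n), orderOf g ∣ n := by
    intro g
    have := orderOf_dvd_card (x := g)
    rwa [hcard] at this
  constructor
  · -- single prime with exponent at least 2
    intro i hki
    set m := ∏ r ∈ Finset.univ.erase i, p r ^ k r with hm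
    have hm0 : m ≠ 0 := (Finset.prod_pos (fun r _ => pow_pos (hp r).pos _)).ne'
    have hfact : n = p i ^ k i * m := by
      rw [hn, ← Finset.mul_prod_erase _ _ (Finset.mem_univ i)]
    have hchar : ∀ g : Multiplicative (ZMod n),
        (p i ^ 2 ∣ orderOf g ↔ ¬ orderOf g ∣ p i ^ 1 * m) := fun g => by
      have hd : orderOf g ∣ p i ^ k i * m := by rw [← hfact]; exact hordn g
      have := dvd_char (e := 2) (hp i) (by norm_num) hki (hndvd i) hm0 hd
      simpa using this
    set S := Finset.univ.filter (fun g : Multiplicative (ZMod n) =>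
      p i ^ 2 ∣ orderOf g) with hS
    have hindep : IsIndepSet (primeCoprimeGraph (Multiplicative (ZMod n))) (S : Set _) := by
      intro g hg h hh hgh hadj
      rw [Finset.mem_coe, hS, Finset.mem_filter] at hg hh
      have hgcd : p i ^ 2 ∣ Nat.gcd (orderOf g) (orderOf h) := Nat.dvd_gcd hg.2 hh.2
      rcases hadj.2 with h1 | h1
      · rw [h1] at hgcd
        have h2 : p i ^ 2 ≤ 1 := Nat.le_of_dvd one_pos hgcd
        have h3 : 1 < p i ^ 2 := Nat.one_lt_pow (by norm_num) (hp i).one_lt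
        omega
      · have hpq : p i = Nat.gcd (orderOf g) (orderOf h) :=
          (Nat.prime_dvd_prime_iff_eq (hp i) h1).mp
            ((dvd_pow_self (p i) two_ne_zero).trans hgcd)
        rw [← hpq] at hgcd
        have h2 : p i ^ 2 ∣ p i ^ 1 := by simpa using hgcd
        have h3 := (Nat.pow_dvd_pow_iff_le_right (hp i).one_lt).mp h2
        omega
    have h1 : S.card + (Finset.univ.filter (fun g : Multiplicative (ZMod n) =>
        ¬ p i ^ 2 ∣ orderOf g)).card = n := by
      have h0 := Finset.card_filter_add_card_filter_not
        (s := (Finset.univ : Finset (Multiplicative (ZMod n))))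
        (p := fun g => p i ^ 2 ∣ orderOf g)
      rwa [Finset.card_univ, hcard, ← hS] at h0
    have h2 : (Finset.univ.filter (fun g : Multiplicative (ZMod n) =>
        ¬ p i ^ 2 ∣ orderOf g))
        = Finset.univ.filter (fun g : Multiplicative (ZMod n) =>
            orderOf g ∣ p i ^ 1 * m) := by
      apply Finset.filter_congr
      intro g _
      rw [hchar g, not_not]
    have h3 : p i ^ 1 * m ∣ n := by
      rw [hfact]
      exact mul_dvd_mul (pow_dvd_pow _ (by omega)) dvd_rfl
    rw [h2, card_filter_orderOf_dvd n _ h3] at h1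
    have h4 : p i * m ≤ p i ^ k i * m :=
      Nat.mul_le_mul_right m (Nat.le_self_pow (by omega) _)
    have h5 : (p i ^ k i - p i) * m = p i ^ k i * m - p i * m := Nat.sub_mul _ _ _
    have h6 : S.card = (p i ^ k i - p i) * m := by
      simp only [pow_one] at h1
      omega
    rw [← h6]
    exact le_indepNum _ S hindep
  · -- two distinct primes
    intro i j hij
    have hji : j ∈ Finset.univ.erase i := Finset.mem_erase.mpr ⟨hij.symm, Finset.mem_univ j⟩
    have hijj : i ∈ Finset.univ.erase j := Finset.mem_erase.mpr ⟨hij, Finset.mem_univ i⟩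
    set m := ∏ r ∈ (Finset.univ.erase i).erase j, p r ^ k r with hm
    have hm0 : m ≠ 0 := (Finset.prod_pos (fun r _ => pow_pos (hp r).pos _)).ne'
    have hQm : p j ^ k j * m = ∏ r ∈ Finset.univ.erase i, p r ^ k r := by
      rw [hm]; exact Finset.mul_prod_erase _ (fun r => p r ^ k r) hji
    have hPm : p i ^ k i * m = ∏ r ∈ Finset.univ.erase j, p r ^ k r := by
      rw [hm, Finset.erase_right_comm]
      exact Finset.mul_prod_erase _ (fun r => p r ^ k r) hijj
    have hfact : n = p i ^ k i * (p j ^ k j * m) := by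
      rw [hn, ← Finset.mul_prod_erase _ _ (Finset.mem_univ i), ← hQm]
    have hiQm : ¬ p i ∣ p j ^ k j * m := by rw [hQm]; exact hndvd i
    have hjPm : ¬ p j ∣ p i ^ k i * m := by rw [hPm]; exact hndvd j
    have hQm0 : p j ^ k j * m ≠ 0 := Nat.mul_ne_zero (pow_ne_zero _ (hp j).pos.ne') hm0
    have hPm0 : p i ^ k i * m ≠ 0 := Nat.mul_ne_zero (pow_ne_zero _ (hp i).pos.ne') hm0
    have hchar_i : ∀ g : Multiplicative (ZMod n),
        (p i ∣ orderOf g ↔ ¬ orderOf g ∣ p j ^ k j * m) := fun g => by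
      have hd : orderOf g ∣ p i ^ k i * (p j ^ k j * m) := by rw [← hfact]; exact hordn g
      have := dvd_char (e := 1) (hp i) le_rfl (hk i) hiQm hQm0 hd
      simpa using this
    have hchar_j : ∀ g : Multiplicative (ZMod n),
        (p j ∣ orderOf g ↔ ¬ orderOf g ∣ p i ^ k i * m) := fun g => by
      have hd : orderOf g ∣ p j ^ k j * (p i ^ k i * m) := by
        have h' : orderOf g ∣ p i ^ k i * (p j ^ k j * m) := by rw [← hfact]; exact hordn g
        rwa [show p i ^ k i * (p j ^ k j * m) = p j ^ k j * (p i ^ k i * m) by ring] at h'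
      have := dvd_char (e := 1) (hp j) le_rfl (hk j) hjPm hPm0 hd
      simpa using this
    set S := Finset.univ.filter (fun g : Multiplicative (ZMod n) =>
      ¬ (orderOf g ∣ p j ^ k j * m ∨ orderOf g ∣ p i ^ k i * m)) with hS
    have hindep : IsIndepSet (primeCoprimeGraph (Multiplicative (ZMod n))) (S : Set _) := by
      intro g hg h hh hgh hadj
      rw [Finset.mem_coe, hS, Finset.mem_filter, not_or] at hg hh
      have hgi : p i ∣ orderOf g := (hchar_i g).mpr hg.2.1
      have hgj : p j ∣ orderOf g := (hchar_j g).mpr hg.2.2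
      have hhi : p i ∣ orderOf h := (hchar_i h).mpr hh.2.1
      have hhj : p j ∣ orderOf h := (hchar_j h).mpr hh.2.2
      have hgcdi : p i ∣ Nat.gcd (orderOf g) (orderOf h) := Nat.dvd_gcd hgi hhi
      have hgcdj : p j ∣ Nat.gcd (orderOf g) (orderOf h) := Nat.dvd_gcd hgj hhj
      rcases hadj.2 with h1 | h1
      · rw [h1] at hgcdi
        have := Nat.le_of_dvd one_pos hgcdi
        have := (hp i).one_lt
        omega
      · have e1 : p i = Nat.gcd (orderOf g) (orderOf h) :=
          (Nat.prime_dvd_prime_iff_eq (hp i) h1).mp hgcdi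
        have e2 : p j = Nat.gcd (orderOf g) (orderOf h) :=
          (Nat.prime_dvd_prime_iff_eq (hp j) h1).mp hgcdj
        exact hij (hmono.injective (e1.trans e2.symm))
    -- counting
    have hA : p j ^ k j * m ∣ n := ⟨p i ^ k i, by rw [hfact]; ring⟩
    have hB : p i ^ k i * m ∣ n := ⟨p j ^ k j, by rw [hfact]; ring⟩
    have hC : m ∣ n := ⟨p i ^ k i * p j ^ k j, by rw [hfact]; ring⟩
    have h1 : (Finset.univ.filter (fun g : Multiplicative (ZMod n) =>
        orderOf g ∣ p j ^ k j * m ∨ orderOf g ∣ p i ^ k i * m)).card + S.card = n := by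
      have h0 := Finset.card_filter_add_card_filter_not
        (s := (Finset.univ : Finset (Multiplicative (ZMod n))))
        (p := fun g => orderOf g ∣ p j ^ k j * m ∨ orderOf g ∣ p i ^ k i * m)
      rwa [Finset.card_univ, hcard, ← hS] at h0
    have h2 : (Finset.univ.filter (fun g : Multiplicative (ZMod n) =>
        orderOf g ∣ p j ^ k j * m ∨ orderOf g ∣ p i ^ k i * m))
        = (Finset.univ.filter (fun g : Multiplicative (ZMod n) =>
            orderOf g ∣ p j ^ k j * m)) ∪
          (Finset.univ.filter (fun g : Multiplicative (ZMod n) =>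
            orderOf g ∣ p i ^ k i * m)) := Finset.filter_or _ _ _
    have hgcdAB : Nat.gcd (p j ^ k j * m) (p i ^ k i * m) = m := by
      rw [Nat.gcd_mul_right]
      have hcop : Nat.Coprime (p j ^ k j) (p i ^ k i) :=
        ((Nat.coprime_primes (hp j) (hp i)).mpr
          (fun h => hij (hmono.injective h.symm))).pow _ _
      rw [hcop, one_mul]
    have h4 : (Finset.univ.filter (fun g : Multiplicative (ZMod n) =>
            orderOf g ∣ p j ^ k j * m)) ∩
          (Finset.univ.filter (fun g : Multiplicative (ZMod n) =>
            orderOf g ∣ p i ^ k i * m))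
        = Finset.univ.filter (fun g : Multiplicative (ZMod n) => orderOf g ∣ m) := by
      rw [← Finset.filter_and]
      apply Finset.filter_congr
      intro g _
      constructor
      · rintro ⟨ha, hb⟩
        have := Nat.dvd_gcd ha hb
        rwa [hgcdAB] at this
      · intro h
        exact ⟨h.trans (dvd_mul_left m _), h.trans (dvd_mul_left m _)⟩
    have h3 := Finset.card_union_add_card_inter
      (Finset.univ.filter (fun g : Multiplicative (ZMod n) =>
        orderOf g ∣ p j ^ k j * m))
      (Finset.univ.filter (fun g : Multiplicative (ZMod n) =>
        orderOf g ∣ p i ^ k i * m))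
    rw [h4, card_filter_orderOf_dvd n _ hA, card_filter_orderOf_dvd n _ hB,
      card_filter_orderOf_dvd n _ hC] at h3
    rw [h2] at h1
    have hP1 : 1 ≤ p i ^ k i := (pow_pos (hp i).pos _)
    have hQ1 : 1 ≤ p j ^ k j := (pow_pos (hp j).pos _)
    have hX := alg_aux (p i ^ k i) (p j ^ k j) m hP1 hQ1
    rw [← hfact] at hX
    have h6 : S.card = (p i ^ k i - 1) * (p j ^ k j - 1) * m := by omega
    rw [← h6]
    exact le_indepNum _ S hindep
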